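/- The complete graph K_n (n ≥ 3) has an orientation of diameter at most 2 if and only if n ≠ 4; in particular, K_3 has an orientation of diameter 2 and K_4 has no orientation of diameter at most 2. -/

import Mathlib

/-!
Diameter at most 2 says that any two distinct vertices are joined by an arc or by a path of
length 2. If `D` is such a tournament on a nonempty vertex set `V`, adding two vertices `a`, `b`
with `a → b`, `b → V` and `V → a` gives one on `|V| + 2` vertices, so everything follows from the
cases `n = 3` (the directed triangle) and `n = 6` (the rotational tournament on `ℤ/5` plus one
vertex). For `n = 4` the six arcs leave only `64` tournaments, none of which works.
-/

/-- `reachIn D k x y` : there is a directed walk of length exactly `k` from `x` to `y`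
in the directed graph given by the relation `D`. -/
def reachIn {V : Type*} (D : V → V → Prop) : ℕ → V → V → Prop
  | 0, x, y => x = y
  | n + 1, x, y => ∃ z, D x z ∧ reachIn D n z y

/-- Directed distance: length of a shortest directed path (`⊤` if none exists). -/
noncomputable def ddist {V : Type*} (D : V → V → Prop) (x y : V) : ℕ∞ :=
  sInf {n : ℕ∞ | ∃ k : ℕ, (k : ℕ∞) = n ∧ reachIn D k x y}

/-- Directed diameter: sup of directed distances over ordered pairs of distinct vertices. -/
noncomputable def ddiam {V : Type*} (D : V → V → Prop) : ℕ∞ :=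
  sSup {n : ℕ∞ | ∃ x y : V, x ≠ y ∧ ddist D x y = n}

open Classical in
/-- Wiener index of a directed graph: sum of directed distances over ordered pairs
of distinct vertices. -/
noncomputable def wiener {V : Type*} [Fintype V] (D : V → V → Prop) : ℕ∞ :=
  ∑ x : V, ∑ y : V, if x ≠ y then ddist D x y else 0

/-- `D` is an orientation of the simple graph `G`: every arc of `D` comes from an edge
of `G`, and each edge of `G` gets exactly one of its two directions. -/
def IsOrientation {V : Type*} (G : SimpleGraph V) (D : V → V → Prop) : Prop :=
  ∀ u v : V, (D u v → G.Adj u v) ∧ (G.Adj u v → (D u v ↔ ¬ D v u))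

open SimpleGraph

section Distance

variable {V : Type*} (D : V → V → Prop)

lemma ddist_le_coe_iff {x y : V} {k : ℕ} : ddist D x y ≤ k ↔ ∃ j ≤ k, reachIn D j x y := by
  constructor
  · intro h
    by_contra! hk
    have : ((k + 1 : ℕ) : ℕ∞) ≤ ddist D x y := le_sInf <| by
      rintro _ ⟨j, rfl, hj⟩
      exact_mod_cast Nat.succ_le_of_lt (lt_of_not_ge fun hjk => hk j hjk hj)
    exact absurd (this.trans h) (by norm_cast; omega)
  · rintro ⟨j, hjk, hj⟩
    exact (sInf_le ⟨j, rfl, hj⟩ : ddist D x y ≤ j).trans (by exact_mod_cast hjk)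

lemma ddiam_le_iff {k : ℕ∞} : ddiam D ≤ k ↔ ∀ x y, x ≠ y → ddist D x y ≤ k := by
  simp only [ddiam, sSup_le_iff, Set.mem_ofPred_eq]
  exact ⟨fun h x y hxy => h _ ⟨x, y, hxy, rfl⟩, fun h _ ⟨x, y, hxy, hd⟩ => hd ▸ h x y hxy⟩

lemma exists_reachIn_le_two_iff {x y : V} :
    (∃ j ≤ 2, reachIn D j x y) ↔ x = y ∨ D x y ∨ ∃ z, D x z ∧ D z y := by
  constructor
  · rintro ⟨j, hj, h⟩
    interval_cases j <;> simp_all [reachIn]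
  · rintro (rfl | h | ⟨z, hxz, hzy⟩)
    · exact ⟨0, by norm_num, rfl⟩
    · exact ⟨1, by norm_num, y, h, rfl⟩
    · exact ⟨2, le_rfl, z, hxz, y, hzy, rfl⟩

lemma ddiam_le_two_iff : ddiam D ≤ 2 ↔ ∀ x y, x ≠ y → D x y ∨ ∃ z, D x z ∧ D z y := by
  refine (ddiam_le_iff D).trans (forall₂_congr fun x y => forall_congr' fun hxy => ?_)
  rw [show (2 : ℕ∞) = (2 : ℕ) from rfl, ddist_le_coe_iff, exists_reachIn_le_two_iff]
  simp [hxy]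

end Distance

lemma isOrientation_completeGraph_iff {V : Type*} {D : V → V → Prop} :
    IsOrientation (completeGraph V) D ↔
      (∀ v, ¬ D v v) ∧ ∀ u v, u ≠ v → (D u v ↔ ¬ D v u) := by
  simp only [IsOrientation, completeGraph, top_adj]
  refine ⟨fun h => ⟨fun v hv => (h v v).1 hv rfl, fun u v => (h u v).2⟩,
    fun ⟨hirr, hasym⟩ u v => ⟨fun huv heq => hirr v (heq ▸ huv), hasym u v⟩⟩

def HasOrientationDiamLeTwo (V : Type*) : Prop :=
  ∃ D : V → V → Prop, IsOrientation (completeGraph V) D ∧ ddiam D ≤ 2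

namespace HasOrientationDiamLeTwo

variable {V W : Type*}

lemma of_equiv (e : V ≃ W) (h : HasOrientationDiamLeTwo V) : HasOrientationDiamLeTwo W := by
  obtain ⟨D, hD, hdiam⟩ := h
  rw [isOrientation_completeGraph_iff] at hD
  rw [ddiam_le_two_iff] at hdiam
  refine ⟨fun x y => D (e.symm x) (e.symm y), isOrientation_completeGraph_iff.mpr
    ⟨fun v => hD.1 _, fun u v huv => hD.2 _ _ (e.symm.injective.ne huv)⟩,
    (ddiam_le_two_iff _).mpr fun x y hxy => ?_⟩
  simpa only [e.exists_congr_left] using hdiam _ _ (e.symm.injective.ne hxy)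

def addTwoVertices (D : V → V → Prop) : Option (Option V) → Option (Option V) → Prop
  | some (some u), some (some v) => D u v
  | some (some _), none => True
  | none, some none => True
  | some none, some (some _) => True
  | _, _ => False

lemma option_option [Nonempty V] (h : HasOrientationDiamLeTwo V) :
    HasOrientationDiamLeTwo (Option (Option V)) := by
  obtain ⟨D, hD, hdiam⟩ := h
  rw [isOrientation_completeGraph_iff] at hD
  rw [ddiam_le_two_iff] at hdiam
  obtain ⟨v⟩ := ‹Nonempty V›
  refine ⟨addTwoVertices D, isOrientation_completeGraph_iff.mpr ⟨?_, ?_⟩,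
    (ddiam_le_two_iff _).mpr ?_⟩
  · rintro (_ | _ | u) <;> simp [addTwoVertices, hD.1]
  · rintro (_ | _ | u) (_ | _ | w) huv <;> simp_all [addTwoVertices]
  · rintro (_ | _ | x) (_ | _ | y) hxy <;> simp_all [addTwoVertices, Option.exists]

lemma fin_add_two {n : ℕ} (hn : n ≠ 0) (h : HasOrientationDiamLeTwo (Fin n)) :
    HasOrientationDiamLeTwo (Fin (n + 2)) :=
  have : NeZero n := ⟨hn⟩
  h.option_option.of_equiv (Fintype.equivOfCardEq (by simp))

end HasOrientationDiamLeTwo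

lemma hasOrientationDiamLeTwo_fin_three : HasOrientationDiamLeTwo (Fin 3) :=
  ⟨fun i j => j = i + 1, isOrientation_completeGraph_iff.mpr (by decide),
    (ddiam_le_two_iff _).mpr (by decide)⟩

/-- The rotational tournament `i → i + 1, i + 2` on `ℤ/5`, and a vertex `5` beating `0` and `3`. -/
def sixTournament (i j : Fin 6) : Prop :=
  if i = 5 then j = 0 ∨ j = 3
  else if j = 5 then i ≠ 0 ∧ i ≠ 3
  else (j.val + 5 - i.val) % 5 = 1 ∨ (j.val + 5 - i.val) % 5 = 2

lemma hasOrientationDiamLeTwo_fin_six : HasOrientationDiamLeTwo (Fin 6) :=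
  ⟨sixTournament, isOrientation_completeGraph_iff.mpr (by unfold sixTournament; decide),
    (ddiam_le_two_iff _).mpr (by unfold sixTournament; decide)⟩

lemma hasOrientationDiamLeTwo_fin {n : ℕ} (h3 : 3 ≤ n) (h4 : n ≠ 4) :
    HasOrientationDiamLeTwo (Fin n) := by
  induction n using Nat.strong_induction_on with
  | _ n ih =>
    obtain ⟨m, rfl⟩ : ∃ m, n = m + 2 := ⟨n - 2, by omega⟩
    by_cases hm : m = 1 ∨ m = 4
    · obtain rfl | rfl := hm
      exacts [hasOrientationDiamLeTwo_fin_three, hasOrientationDiamLeTwo_fin_six]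
    · exact .fin_add_two (by omega) (ih m (by omega) (by omega) (by omega))

def fourTournament (a b c d e f : Bool) : Fin 4 → Fin 4 → Bool :=
  ![![false, a, b, c], ![!a, false, d, e], ![!b, !d, false, f], ![!c, !e, !f, false]]

lemma fourTournament_not_diam_le_two : ∀ a b c d e f : Bool,
    ¬ ∀ x y, x ≠ y → fourTournament a b c d e f x y ∨
      ∃ z, fourTournament a b c d e f x z ∧ fourTournament a b c d e f z y := by
  decide

lemma not_hasOrientationDiamLeTwo_fin_four : ¬ HasOrientationDiamLeTwo (Fin 4) := by
  classical
  rintro ⟨D, hD, hdiam⟩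
  obtain ⟨hirr, hasym⟩ := isOrientation_completeGraph_iff.mp hD
  have hT : ∀ x y, D x y ↔ fourTournament (D 0 1) (D 0 2) (D 0 3) (D 1 2) (D 1 3) (D 2 3) x y := by
    intro x y
    have hrev := fun x y : Fin 4 => hasym y x
    fin_cases x <;> fin_cases y <;>
      simp [fourTournament, hirr, hrev 0 1, hrev 0 2, hrev 0 3, hrev 1 2, hrev 1 3, hrev 2 3]
  rw [ddiam_le_two_iff] at hdiam
  exact fourTournament_not_diam_le_two _ _ _ _ _ _ fun x y hxy => (hdiam x y hxy).imp (hT x y).1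
    fun ⟨z, hxz, hzy⟩ => ⟨z, (hT x z).1 hxz, (hT z y).1 hzy⟩

/-- For `n ≥ 3`, the complete graph `K_n` has an orientation of diameter at most `2`
iff `n ≠ 4`. -/
theorem completeGraph_orientation_diam_two_iff (n : ℕ) (hn : 3 ≤ n) :
    (∃ D : Fin n → Fin n → Prop,
        IsOrientation (SimpleGraph.completeGraph (Fin n)) D ∧ ddiam D ≤ 2) ↔ n ≠ 4 := by
  refine ⟨?_, hasOrientationDiamLeTwo_fin hn⟩
  rintro h rfl
  exact not_hasOrientationDiamLeTwo_fin_four h
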